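/- For the sensitive star graph, the within-group exposure of the blue group at 1 hop equals φ^(1)_{0→0} = p(n+1)/(np+1), and the within-group exposure of the red group equals φ^(1)_{1→1} = 0. -/

import Mathlib

open Finset
open scoped Classical

/-- The set of nodes at shortest-path distance exactly `k` from `v`. -/
noncomputable def Nk {V : Type*} [Fintype V] (G : SimpleGraph V) (k : ℕ) (v : V) : Finset V :=
  Finset.univ.filter (fun w => G.dist v w = k)

/-- Nodes of sensitive group `s` having a nonempty `k`-hop neighborhood. -/
noncomputable def Vk {V : Type*} [Fintype V] (G : SimpleGraph V) (S : V → Bool) (k : ℕ)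
    (s : Bool) : Finset V :=
  Finset.univ.filter (fun v => S v = s ∧ (Nk G k v).Nonempty)

/-- `k`-hop group exposure: average over group-`s` nodes (with nonempty `k`-hop
neighborhood) of the fraction of their `k`-hop neighbors in group `s'`. -/
noncomputable def phi {V : Type*} [Fintype V] (G : SimpleGraph V) (S : V → Bool) (k : ℕ)
    (s s' : Bool) : ℝ :=
  (∑ v ∈ Vk G S k s,
      (((Nk G k v).filter (fun w => S w = s')).card : ℝ) / ((Nk G k v).card : ℝ)) /
    ((Vk G S k s).card : ℝ)

/-- Binary-attribute `k`-hop structural bias `NB^(k) = |φ_{0→0} + φ_{1→1} − 1|`. -/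
noncomputable def NB {V : Type*} [Fintype V] (G : SimpleGraph V) (S : V → Bool) (k : ℕ) : ℝ :=
  |phi G S k false false + phi G S k true true - 1|

/-- Vertices of the sensitive star graph: `none` is the blue center,
`some i` the peripheral nodes. -/
abbrev Vstar (n : ℕ) := Option (Fin n)

/-- The star graph: the center is adjacent to every peripheral node. -/
def Gstar (n : ℕ) : SimpleGraph (Vstar n) :=
  SimpleGraph.fromRel (fun x _ => x = none)

/-- Colors: the center is blue (`false`); peripheral node `i` is blue iff `i < m`
(so `m` peripheral nodes are blue and `n − m` are red (`true`)). -/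
def Sstar (n m : ℕ) : Vstar n → Bool
  | none => false
  | some i => decide (m ≤ i.val)

/-! Every leaf of the star is adjacent only to the blue centre, so a blue leaf has within-group
exposure `1` and a red leaf `0`, which already gives `φ_{1→1} = 0`. The centre sees `m` blue nodes
among its `n` neighbours, so averaging over the `m + 1` blue nodes gives
`φ_{0→0} = (m/n + m)/(m + 1)`, which is `p(n+1)/(np+1)` for `p = m/n`. -/

section Exposure

variable {V : Type*} [Fintype V] (G : SimpleGraph V) (S : V → Bool)

lemma Nk_one (v : V) : Nk G 1 v = univ.filter (G.Adj v) := by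
  simp only [Nk, SimpleGraph.dist_eq_one_iff_adj]

lemma Vk_eq_filter_of_nonempty {k : ℕ} (h : ∀ v, (Nk G k v).Nonempty) (s : Bool) :
    Vk G S k s = univ.filter (S · = s) := by
  simp only [Vk, h, and_true]

lemma phi_eq_zero_of_forall_ne {k : ℕ} {s s' : Bool}
    (h : ∀ v w, S v = s → w ∈ Nk G k v → S w ≠ s') : phi G S k s s' = 0 := by
  rw [phi, sum_eq_zero, zero_div]
  intro v hv
  rw [filter_false_of_mem fun w hw => h v w (mem_filter.1 hv).2.1 hw, card_empty, Nat.cast_zero,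
    zero_div]

end Exposure

section Star

variable {n m : ℕ}

lemma Gstar_adj {x y : Vstar n} : (Gstar n).Adj x y ↔ x ≠ y ∧ (x = none ∨ y = none) := by
  simp [Gstar, SimpleGraph.fromRel_adj]

lemma Nk_Gstar_none : Nk (Gstar n) 1 none = univ.map .some := by
  ext (_ | i) <;> simp [Nk_one, Gstar_adj]

lemma Nk_Gstar_some (i : Fin n) : Nk (Gstar n) 1 (some i) = {none} := by
  ext (_ | j) <;> simp [Nk_one, Gstar_adj]

lemma card_Nk_Gstar_none : #(Nk (Gstar n) 1 none) = n := by
  simp [Nk_Gstar_none]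

lemma Nk_Gstar_nonempty (hn : 0 < n) (v : Vstar n) : (Nk (Gstar n) 1 v).Nonempty := by
  cases v with
  | none => exact ⟨some ⟨0, hn⟩, by simp [Nk_Gstar_none]⟩
  | some i => simp [Nk_Gstar_some]

lemma filter_Sstar_eq_false :
    univ.filter (Sstar n m · = false) = insertNone (univ.filter fun i : Fin n => i.val < m) := by
  ext (_ | i) <;> simp [Sstar.eq_def]

lemma filter_Nk_Gstar_none_Sstar_eq_false :
    (Nk (Gstar n) 1 none).filter (Sstar n m · = false) =
      (univ.filter fun i : Fin n => i.val < m).map .some := by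
  ext (_ | i) <;> simp [Nk_Gstar_none, Sstar]

lemma phi_Gstar_false_false (hmn : m < n) :
    phi (Gstar n) (Sstar n m) 1 false false = ((m : ℝ) / n + m) / (m + 1) := by
  have hblue : #(univ.filter fun i : Fin n => i.val < m) = m := by
    rw [Fin.card_filter_val_lt, min_eq_right hmn.le]
  rw [phi, Vk_eq_filter_of_nonempty _ _ (Nk_Gstar_nonempty (by omega)), filter_Sstar_eq_false,
    sum_insertNone, card_insertNone, filter_Nk_Gstar_none_Sstar_eq_false, card_map, hblue,
    card_Nk_Gstar_none]
  have hleaf (i : Fin n) : (#((Nk (Gstar n) 1 (some i)).filter (Sstar n m · = false)) : ℝ) /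
      #(Nk (Gstar n) 1 (some i)) = 1 := by
    simp [Nk_Gstar_some, filter_singleton, Sstar]
  simp only [hleaf, sum_const, hblue, nsmul_eq_mul, mul_one]
  push_cast
  ring

lemma phi_Gstar_true_true : phi (Gstar n) (Sstar n m) 1 true true = 0 := by
  refine phi_eq_zero_of_forall_ne _ _ fun v w hv hw => ?_
  cases v with
  | none => simp [Sstar] at hv
  | some i => simp_all [Nk_Gstar_some, Sstar]

end Star

theorem stmt16_general (n m : ℕ) (hmn : m < n) :
    phi (Gstar n) (Sstar n m) 1 false false =
      ((m : ℝ) / n) * ((n : ℝ) + 1) / ((n : ℝ) * ((m : ℝ) / n) + 1) ∧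
    phi (Gstar n) (Sstar n m) 1 true true = 0 := by
  refine ⟨?_, phi_Gstar_true_true⟩
  have hn : (n : ℝ) ≠ 0 := Nat.cast_ne_zero.2 (by omega)
  rw [phi_Gstar_false_false hmn]
  field_simp
  ring

/-- for the sensitive star graph (blue center, `n` peripheral nodes of
which `m = np` are blue, `p = m/n`), the 1-hop within-group exposures are
`φ^(1)_{0→0} = p(n+1)/(np+1)` for the blue group and `φ^(1)_{1→1} = 0` for the red group. -/
theorem stmt16 (n m : ℕ) (hm : 0 < m) (hmn : m < n) :
    phi (Gstar n) (Sstar n m) 1 false false =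
      ((m : ℝ) / n) * ((n : ℝ) + 1) / ((n : ℝ) * ((m : ℝ) / n) + 1) ∧
    phi (Gstar n) (Sstar n m) 1 true true = 0 :=
  stmt16_general n m hmn
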